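/- Let (X, ρ) be a metric space that is an ANR and satisfies the Disjoint Arcs Property. Given continuous maps f₁, f₂ : D × I → X and ε > 0, there exist continuous maps f₁′, f₂′ : D × I → X such that ρ(f_i(p), f_i′(p)) < ε for all p ∈ D × I and f₁′(D × {0,1}) ∩ f₂′(D × {0,1}) = ∅. -/

import Mathlib

/-! Embed `X` isometrically into the convex hull `C` of its Kuratowski image in `X →ᵇ ℝ`; there
`X` is closed, so the ANR property gives a retraction `r` of a neighbourhood of `X` in `C`. Feed the
paths `fᵢ ∘ β` to the Disjoint Arcs Property, where `β` runs along the bottom, right and top edges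
of the square, to get disjoint arcs `gᵢ`. Near the bottom and top edges, slide `fᵢ` linearly in `C`
towards `gᵢ ∘ τ`, where `β ∘ τ` is the identity on those edges, reaching it on the edges
themselves. The retraction `r` pushes the result back into `X` while moving it only a little, and
the new maps send the bottom and top edges into the disjoint images of `g₁` and `g₂`. -/

open unitInterval Topology

noncomputable section

/-- The sum metric on a product of (pseudo)metric spaces:
`ρ̃((x,s),(y,t)) = ρ(x,y) + |s − t|`. -/
def sumDist {X Y : Type*} [PseudoMetricSpace X] [PseudoMetricSpace Y] (a b : X × Y) : ℝ :=
  dist a.1 b.1 + dist a.2 b.2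

/-- `X` is an ANR: for every metric space `Z` and every closed topological embedding
`j : X → Z`, there is an open set `U` with `j(X) ⊆ U ⊆ Z` and a continuous retraction
of `U` onto `j(X)`. -/
def IsANR (X : Type u) [MetricSpace X] : Prop :=
  ∀ (Z : Type u) [MetricSpace Z] (j : X → Z), Topology.IsClosedEmbedding j →
    ∃ U : Set Z, IsOpen U ∧ Set.range j ⊆ U ∧
      ∃ r : C(U, Z), (∀ u : U, r u ∈ Set.range j) ∧
        (∀ u : U, (u : Z) ∈ Set.range j → r u = (u : Z))

/-- The Disjoint Arcs Property: any two paths in `X` can be approximated,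
arbitrarily closely, by paths with disjoint images. -/
def DAP (X : Type*) [MetricSpace X] : Prop :=
  ∀ (f₁ f₂ : C(I, X)) (ε : ℝ), 0 < ε →
    ∃ g₁ g₂ : C(I, X),
      (∀ s, dist (f₁ s) (g₁ s) < ε) ∧ (∀ s, dist (f₂ s) (g₂ s) < ε) ∧
      Set.range g₁ ∩ Set.range g₂ = ∅

/-- A path concordance in `X`: a map `F : D × I → X × I` with
`F(D × {e}) ⊆ X × {e}` for `e ∈ {0,1}`. -/
def IsPathConcordance {X : Type*} [TopologicalSpace X] (F : C(I × I, X × I)) : Prop :=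
  ∀ d : I, (F (d, 0)).2 = 0 ∧ (F (d, 1)).2 = 1

/-- The Disjoint Path Concordances Property (DCP): any two path homotopies
`f₁, f₂ : D × I → X` admit disjoint path concordances `F₁, F₂ : D × I → X × I`
whose `X`-coordinates approximate `f₁, f₂` arbitrarily closely. -/
def DCP (X : Type*) [MetricSpace X] : Prop :=
  ∀ (f₁ f₂ : C(I × I, X)) (ε : ℝ), 0 < ε →
    ∃ F₁ F₂ : C(I × I, X × I),
      IsPathConcordance F₁ ∧ IsPathConcordance F₂ ∧
      Set.range F₁ ∩ Set.range F₂ = ∅ ∧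
      (∀ p, dist (f₁ p) (F₁ p).1 < ε) ∧ (∀ p, dist (f₂ p) (F₂ p).1 < ε)

open Set Metric BoundedContinuousFunction

section Kuratowski

variable {X : Type*} [PseudoMetricSpace X]

def kuratowskiMap (x₀ x : X) : X →ᵇ ℝ :=
  ofNormedAddCommGroup (fun z => dist z x - dist z x₀) (by fun_prop) (dist x x₀) fun z => by
    simpa only [Real.norm_eq_abs, dist_comm z] using abs_dist_sub_le x x₀ z

@[simp]
lemma kuratowskiMap_apply (x₀ x z : X) : kuratowskiMap x₀ x z = dist z x - dist z x₀ := rfl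

lemma isometry_kuratowskiMap (x₀ : X) : Isometry (kuratowskiMap x₀) := by
  refine Isometry.of_dist_eq fun x y => le_antisymm ?_ ?_
  · refine (dist_le dist_nonneg).2 fun z => ?_
    simpa only [kuratowskiMap_apply, Real.dist_eq, sub_sub_sub_cancel_right, dist_comm z]
      using abs_dist_sub_le x y z
  · simpa [Real.dist_eq, abs_sub_comm] using
      dist_coe_le_dist (f := kuratowskiMap x₀ x) (g := kuratowskiMap x₀ y) x

-- Evaluating at `x` isolates `∑ wᵢ dist x xᵢ`, because `kuratowskiMap x₀ x x = -dist x x₀`.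
lemma sum_mul_dist_le_dist_kuratowskiMap {ι : Type*} [Fintype ι] (x₀ : X) {w : ι → ℝ}
    (hw : ∑ i, w i = 1) (xs : ι → X) (x : X) :
    ∑ i, w i * dist x (xs i) ≤
      dist (∑ i, w i • kuratowskiMap x₀ (xs i)) (kuratowskiMap x₀ x) := by
  calc ∑ i, w i * dist x (xs i)
      = (∑ i, w i • kuratowskiMap x₀ (xs i)) x - kuratowskiMap x₀ x x := by
        simp only [coe_sum, coe_smul, Finset.sum_apply, smul_eq_mul,
          kuratowskiMap_apply, dist_self, mul_sub, Finset.sum_sub_distrib, ← Finset.sum_mul, hw]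
        ring
    _ ≤ dist ((∑ i, w i • kuratowskiMap x₀ (xs i)) x) (kuratowskiMap x₀ x x) :=
        (le_abs_self _).trans (Real.dist_eq _ _).ge
    _ ≤ _ := dist_coe_le_dist x

lemma convexHull_inter_closure_range_kuratowskiMap (x₀ : X) :
    convexHull ℝ (range (kuratowskiMap x₀)) ∩ closure (range (kuratowskiMap x₀)) =
      range (kuratowskiMap x₀) := by
  refine Subset.antisymm ?_ (subset_inter (subset_convexHull ℝ _) subset_closure)
  rintro _ ⟨hz, hcl⟩
  obtain ⟨ι, _, w, y, hw0, hw1, hy, rfl⟩ := mem_convexHull_iff_exists_fintype.1 hz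
  choose xs hxs using hy
  obtain rfl : y = fun i => kuratowskiMap x₀ (xs i) := funext fun i => (hxs i).symm
  set z := ∑ i, w i • kuratowskiMap x₀ (xs i)
  obtain ⟨i, -, hi⟩ : ∃ i ∈ Finset.univ, (0 : ℝ) < w i :=
    Finset.exists_lt_of_sum_lt (by simp [hw1])
  have hC : 0 < 1 + (w i)⁻¹ := by positivity
  have key (x : X) :
      dist z (kuratowskiMap x₀ (xs i)) ≤ (1 + (w i)⁻¹) * dist z (kuratowskiMap x₀ x) := by
    have hwx : w i * dist x (xs i) ≤ dist z (kuratowskiMap x₀ x) :=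
      (Finset.single_le_sum (fun j _ => mul_nonneg (hw0 j) dist_nonneg)
        (Finset.mem_univ i)).trans (sum_mul_dist_le_dist_kuratowskiMap x₀ hw1 xs x)
    calc dist z (kuratowskiMap x₀ (xs i))
        ≤ dist z (kuratowskiMap x₀ x) + dist x (xs i) := by
          simpa only [(isometry_kuratowskiMap x₀).dist_eq] using
            dist_triangle z (kuratowskiMap x₀ x) (kuratowskiMap x₀ (xs i))
      _ ≤ dist z (kuratowskiMap x₀ x) + (w i)⁻¹ * dist z (kuratowskiMap x₀ x) := by
          gcongr
          rwa [← le_div_iff₀' hi, div_eq_inv_mul] at hwx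
      _ = _ := by ring
  refine ⟨xs i, (eq_of_forall_dist_le fun ε hε => ?_).symm⟩
  obtain ⟨x, hx⟩ := mem_closure_range_iff.1 hcl (ε / (1 + (w i)⁻¹)) (by positivity)
  calc _ ≤ (1 + (w i)⁻¹) * dist z (kuratowskiMap x₀ x) := key x
    _ ≤ (1 + (w i)⁻¹) * (ε / (1 + (w i)⁻¹)) := by gcongr
    _ = ε := mul_div_cancel₀ _ hC.ne'

end Kuratowski

section KuratowskiHull

variable {X : Type*} [MetricSpace X]

def kuratowskiHullMap (x₀ x : X) : convexHull ℝ (range (kuratowskiMap x₀)) :=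
  ⟨kuratowskiMap x₀ x, subset_convexHull ℝ _ (mem_range_self x)⟩

lemma isometry_kuratowskiHullMap (x₀ : X) : Isometry (kuratowskiHullMap x₀) :=
  Isometry.of_dist_eq fun x y => (isometry_kuratowskiMap x₀).dist_eq x y

-- The range of `kuratowskiMap x₀` need not be closed in `X →ᵇ ℝ` (for incomplete `X`), but it is
-- relatively closed in its convex hull.
lemma isClosedEmbedding_kuratowskiHullMap (x₀ : X) :
    IsClosedEmbedding (kuratowskiHullMap x₀) := by
  refine ⟨(isometry_kuratowskiHullMap x₀).isEmbedding, ?_⟩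
  have : range (kuratowskiHullMap x₀) = Subtype.val ⁻¹' closure (range (kuratowskiMap x₀)) := by
    ext c
    refine ⟨?_, fun hc => ?_⟩
    · rintro ⟨x, rfl⟩
      exact subset_closure (mem_range_self x)
    · obtain ⟨x, hx⟩ := (convexHull_inter_closure_range_kuratowskiMap x₀).subset ⟨c.2, hc⟩
      exact ⟨x, Subtype.ext hx⟩
  rw [this]
  exact isClosed_closure.preimage continuous_subtype_val

end KuratowskiHull

lemma exists_pos_forall_dist_retraction_lt {Z : Type*} [PseudoMetricSpace Z] {U K : Set Z}
    (hU : IsOpen U) (r : C(U, Z)) (hK : IsCompact K) (hKU : K ⊆ U)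
    (hr : ∀ u : U, (u : Z) ∈ K → r u = u) {ε : ℝ} (hε : 0 < ε) :
    ∃ η > 0, ∀ z ∈ thickening η K, ∃ hz : z ∈ U, dist (r ⟨z, hz⟩) z < ε := by
  set V : Set U := {u | dist (r u) u < ε}
  have hV : IsOpen (Subtype.val '' V) :=
    hU.isOpenMap_subtype_val _
      (isOpen_lt (r.continuous.dist continuous_subtype_val) continuous_const)
  have hKV : K ⊆ Subtype.val '' V := fun z hz =>
    ⟨⟨z, hKU hz⟩, by simpa [V, hr ⟨z, hKU hz⟩ hz] using hε, rfl⟩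
  obtain ⟨η, hη, hηV⟩ := hK.exists_thickening_subset_open hV hKV
  refine ⟨η, hη, fun z hz => ?_⟩
  obtain ⟨u, hu, rfl⟩ := hηV hz
  exact ⟨u.2, hu⟩

theorem IsANR.exists_approx_of_weight {X : Type u} [MetricSpace X] [Nonempty X] (hX : IsANR X)
    {K : Set X} (hK : IsCompact K) {ε : ℝ} (hε : 0 < ε) :
    ∃ η > 0, ∀ {Y : Type v} [TopologicalSpace Y] (f g : C(Y, X)) (w : C(Y, I)),
      (∀ y, f y ∈ K) → (∀ y, w y ≠ 0 → dist (f y) (g y) < η) →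
      ∃ f' : C(Y, X), (∀ y, dist (f y) (f' y) < ε) ∧ ∀ y, w y = 1 → f' y = g y := by
  obtain ⟨x₀⟩ := ‹Nonempty X›
  set j := kuratowskiHullMap x₀
  have hj : Isometry j := isometry_kuratowskiHullMap x₀
  obtain ⟨U, hU, hjU, r, hr_range, hr_fix⟩ := hX _ j (isClosedEmbedding_kuratowskiHullMap x₀)
  obtain ⟨η, hη, hηU⟩ := exists_pos_forall_dist_retraction_lt hU r (hK.image hj.continuous)
    ((image_subset_range _ _).trans hjU) (fun u hu => hr_fix u (image_subset_range _ _ hu))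
    (half_pos hε)
  refine ⟨min η (ε / 2), by positivity, fun f g w hfK hfg => ?_⟩
  let H (y : _) : convexHull ℝ (range (kuratowskiMap x₀)) :=
    ⟨AffineMap.lineMap (kuratowskiMap x₀ (f y)) (kuratowskiMap x₀ (g y)) (w y : ℝ),
      (convex_convexHull ℝ _).lineMap_mem (j (f y)).2 (j (g y)).2 (w y).2⟩
  have hHc : Continuous H := by
    refine Continuous.subtype_mk (Continuous.lineMap ?_ ?_ (by fun_prop)) _ <;>
      exact (isometry_kuratowskiMap x₀).continuous.comp (by fun_prop)
  have hH (y) : dist (H y) (j (f y)) < min η (ε / 2) := by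
    have : dist (H y) (j (f y)) = w y * dist (f y) (g y) := by
      change dist (AffineMap.lineMap _ _ _) (kuratowskiMap x₀ (f y)) = _
      rw [dist_lineMap_left, (isometry_kuratowskiMap x₀).dist_eq,
        Real.norm_of_nonneg (w y).2.1]
    rw [this]
    by_cases hw : w y = 0
    · simp [hw, hη, hε]
    · exact (mul_le_of_le_one_left dist_nonneg (w y).2.2).trans_lt (hfg y hw)
  choose hHU hHr using fun y => hηU (H y) (mem_thickening_iff.2
    ⟨j (f y), mem_image_of_mem j (hfK y), (hH y).trans_le (min_le_left _ _)⟩)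
  choose f' hf' using fun y => hr_range ⟨H y, hHU y⟩
  have hf'c : Continuous f' := by
    rw [hj.isEmbedding.continuous_iff]
    simpa only [Function.comp_def, hf'] using r.continuous.comp (hHc.subtype_mk hHU)
  refine ⟨⟨f', hf'c⟩, fun y => ?_, fun y hy => hj.injective ?_⟩
  · calc dist (f y) (f' y) = dist (j (f y)) (r ⟨H y, hHU y⟩) := by rw [← hj.dist_eq, hf']
      _ ≤ dist (j (f y)) (H y) + dist (H y) (r ⟨H y, hHU y⟩) := dist_triangle _ _ _
      _ < ε / 2 + ε / 2 :=
        add_lt_add ((dist_comm _ _).trans_lt ((hH y).trans_le (min_le_right _ _)))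
          ((dist_comm _ _).trans_lt (hHr y))
      _ = ε := add_halves ε
  · have hHg : H y = j (g y) := Subtype.ext (by simp [H, j, kuratowskiHullMap, hy])
    simp only [ContinuousMap.coe_mk, hf', hHg]
    exact hr_fix _ (mem_range_self _)

lemma exists_weight_eq_one_of_dist_comp_lt {Y X : Type*} [PseudoMetricSpace Y] [CompactSpace Y]
    [PseudoMetricSpace X] (ρ : C(Y, Y)) (f g : C(Y, X)) {η : ℝ} (hη : 0 < η)
    (hg : ∀ y, dist (f (ρ y)) (g y) < η / 2) :
    ∃ w : C(Y, I), (∀ y, ρ y = y → w y = 1) ∧ ∀ y, w y ≠ 0 → dist (f y) (g y) < η := by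
  obtain ⟨δ, hδ, hf⟩ := uniformContinuous_iff.1
    (CompactSpace.uniformContinuous_of_continuous f.continuous) (η / 2) (half_pos hη)
  refine ⟨⟨fun y => projIcc 0 1 zero_le_one (1 - dist (ρ y) y / δ), by fun_prop⟩,
    fun y hy => by simp [hy], fun y hw => ?_⟩
  have hρ : dist (ρ y) y < δ := by
    by_contra! h
    exact hw (projIcc_of_le_left zero_le_one (by rwa [sub_nonpos, one_le_div hδ]))
  calc dist (f y) (g y) ≤ dist (f y) (f (ρ y)) + dist (f (ρ y)) (g y) := dist_triangle _ _ _
    _ < η / 2 + η / 2 := add_lt_add (hf ((dist_comm _ _).trans_lt hρ)) (hg y)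
    _ = η := add_halves η

-- Runs along the bottom edge, up the right edge and back along the top edge of the square.
def bottomTopPath : C(I, I × I) :=
  ⟨fun s => (projIcc 0 1 zero_le_one (min (3 * s) (3 - 3 * s)),
    projIcc 0 1 zero_le_one (3 * s - 1)), by fun_prop⟩

def bottomTopParam : C(I × I, I) :=
  ⟨fun p => projIcc 0 1 zero_le_one (p.1 / 3 + p.2 * (1 - 2 * p.1 / 3)), by fun_prop⟩

lemma bottomTopPath_bottomTopParam {p : I × I} (hp : p.2 = 0 ∨ p.2 = 1) :
    bottomTopPath (bottomTopParam p) = p := by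
  obtain ⟨⟨d, hd0, hd1⟩, t⟩ := p
  rcases hp with rfl | rfl
  all_goals
    ext <;>
    simp only [bottomTopPath, bottomTopParam, ContinuousMap.coe_mk, coe_projIcc, Icc.coe_zero,
      Icc.coe_one, max_def, min_def] <;>
    split_ifs <;> linarith

/-- If `X` is a metric ANR with the Disjoint Arcs Property, then any two maps
`f₁, f₂ : D × I → X` can be approximated, arbitrarily closely, by maps `f₁′, f₂′` with
`f₁′(D × {0,1}) ∩ f₂′(D × {0,1}) = ∅`. -/
theorem disjoint_boundary_approx {X : Type u} [MetricSpace X]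
    (hANR : IsANR X) (hDAP : DAP X)
    (f₁ f₂ : C(I × I, X)) (ε : ℝ) (hε : 0 < ε) :
    ∃ f₁' f₂' : C(I × I, X),
      (∀ p, dist (f₁ p) (f₁' p) < ε) ∧ (∀ p, dist (f₂ p) (f₂' p) < ε) ∧
      (⇑f₁' '' {p : I × I | p.2 = 0 ∨ p.2 = 1}) ∩
        (⇑f₂' '' {p : I × I | p.2 = 0 ∨ p.2 = 1}) = ∅ := by
  have : Nonempty X := ⟨f₁ (0, 0)⟩
  obtain ⟨η, hη, happrox⟩ := hANR.exists_approx_of_weight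
    ((isCompact_range f₁.continuous).union (isCompact_range f₂.continuous)) hε
  obtain ⟨g₁, g₂, hg₁, hg₂, hg⟩ :=
    hDAP (f₁.comp bottomTopPath) (f₂.comp bottomTopPath) (η / 2) (half_pos hη)
  have approx (f : C(I × I, X)) (g : C(I, X)) (hfK : ∀ p, f p ∈ range f₁ ∪ range f₂)
      (hfg : ∀ s, dist (f (bottomTopPath s)) (g s) < η / 2) :
      ∃ f' : C(I × I, X), (∀ p, dist (f p) (f' p) < ε) ∧
        f' '' {p : I × I | p.2 = 0 ∨ p.2 = 1} ⊆ range g := by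
    obtain ⟨w, hw1, hw⟩ := exists_weight_eq_one_of_dist_comp_lt
      (bottomTopPath.comp bottomTopParam) f (g.comp bottomTopParam) hη fun p => hfg _
    obtain ⟨f', hf', hf'g⟩ := happrox f (g.comp bottomTopParam) w hfK hw
    refine ⟨f', hf', ?_⟩
    rintro _ ⟨p, hp, rfl⟩
    exact ⟨_, (hf'g p (hw1 p (bottomTopPath_bottomTopParam hp))).symm⟩
  obtain ⟨f₁', hf₁', h₁⟩ := approx f₁ g₁ (fun p => .inl (mem_range_self p)) hg₁
  obtain ⟨f₂', hf₂', h₂⟩ := approx f₂ g₂ (fun p => .inr (mem_range_self p)) hg₂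
  exact ⟨f₁', f₂', hf₁', hf₂', subset_empty_iff.1 (hg ▸ inter_subset_inter h₁ h₂)⟩
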